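/- arXiv:0712.4074 — 3 statements merged into one kernel-verified Lean document; each statement's English description precedes it below -/
import Mathlib

section
/- Fix ε ∈ (0,1) and h > 0. Then, as ς → 0⁺, ∫₀^∞ exp(−(s − hε)²/(2ς²)) / (εh + (1−ε)s) ds is asymptotic to √(2π) ς / (h ε (2−ε)); that is, the ratio of the integral to √(2π)ς/(hε(2−ε)) tends to 1 as ς → 0⁺. -/
open MeasureTheory Set Filter Real

lemma laplace_aux_subst (ε h ς : ℝ) (hς : ς ≠ 0) :
    (∫ s in Set.Ioi (0 : ℝ), Real.exp (-(s - h * ε) ^ 2 / (2 * ς ^ 2)) /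
        (ε * h + (1 - ε) * s)) =
      |ς| * ∫ t : ℝ, (if 0 < ς * t + h * ε then
          Real.exp (-t ^ 2 / 2) / (ε * h + (1 - ε) * (ς * t + h * ε)) else 0) := by
  set f : ℝ → ℝ := (Set.Ioi (0:ℝ)).indicator
    (fun s => Real.exp (-(s - h * ε) ^ 2 / (2 * ς ^ 2)) / (ε * h + (1 - ε) * s)) with hf
  have h1 : (∫ s in Set.Ioi (0 : ℝ), Real.exp (-(s - h * ε) ^ 2 / (2 * ς ^ 2)) /
      (ε * h + (1 - ε) * s)) = ∫ s, f s := (integral_indicator measurableSet_Ioi).symm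
  have h2 : ∫ t : ℝ, f (ς * t + h * ε) = |ς⁻¹| • ∫ s, f s := by
    have := MeasureTheory.Measure.integral_comp_mul_left (fun u => f (u + h * ε)) ς
    simpa [MeasureTheory.integral_add_right_eq_self (μ := volume) f (h * ε)] using this
  have h3 : ∀ t : ℝ, f (ς * t + h * ε) = (if 0 < ς * t + h * ε then
      Real.exp (-t ^ 2 / 2) / (ε * h + (1 - ε) * (ς * t + h * ε)) else 0) := by
    intro t
    rw [hf, Set.indicator_apply]
    by_cases ht : (0:ℝ) < ς * t + h * ε
    · rw [if_pos (Set.mem_Ioi.mpr ht), if_pos ht]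
      congr 2
      have : (ς * t + h * ε - h * ε) ^ 2 = t ^ 2 / 2 * (2 * ς ^ 2) := by ring
      rw [this, neg_div, neg_div, mul_div_assoc]
      rw [div_self (by positivity : (2 * ς ^ 2 : ℝ) ≠ 0), mul_one]
    · rw [if_neg (fun hm => ht (Set.mem_Ioi.mp hm)), if_neg ht]
  rw [h1, ← MeasureTheory.integral_congr_ae (Filter.Eventually.of_forall h3), h2,
    smul_eq_mul, ← mul_assoc, abs_inv]
  rw [mul_inv_cancel₀ (by simpa using hς), one_mul]

/-- Laplace-method asymptotics: as `ς → 0⁺`,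
`∫₀^∞ exp(-(s - hε)²/(2ς²)) / (εh + (1-ε)s) ds ∼ √(2π) ς / (h ε (2-ε))`. -/
theorem laplace_asymptotics_of_gaussian_integral (ε h : ℝ)
    (hε : ε ∈ Set.Ioo (0 : ℝ) 1) (hh : 0 < h) :
    Tendsto (fun ς : ℝ =>
        (∫ s in Set.Ioi (0 : ℝ), Real.exp (-(s - h * ε) ^ 2 / (2 * ς ^ 2)) /
            (ε * h + (1 - ε) * s)) /
          (Real.sqrt (2 * Real.pi) * ς / (h * ε * (2 - ε))))
      (nhdsWithin 0 (Set.Ioi 0)) (nhds 1) := by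
  obtain ⟨hε0, hε1⟩ := hε
  have hεh : (0:ℝ) < ε * h := by positivity
  have h1ε : (0:ℝ) < 1 - ε := by linarith
  have hG : (0:ℝ) < h * ε * (2 - ε) := by nlinarith
  have hGa : ε * h + (1 - ε) * (h * ε) = h * ε * (2 - ε) := by ring
  set F : ℝ → ℝ → ℝ := fun ς t => (if 0 < ς * t + h * ε then
      Real.exp (-t ^ 2 / 2) / (ε * h + (1 - ε) * (ς * t + h * ε)) else 0) with hF
  -- dominated convergence
  have key : Tendsto (fun ς : ℝ => ∫ t : ℝ, F ς t) (nhdsWithin 0 (Set.Ioi 0))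
      (nhds (∫ t : ℝ, Real.exp (-t ^ 2 / 2) / (h * ε * (2 - ε)))) := by
    apply MeasureTheory.tendsto_integral_filter_of_dominated_convergence
      (fun t => Real.exp (-t ^ 2 / 2) / (ε * h))
    · filter_upwards with ς
      apply Measurable.aestronglyMeasurable
      apply Measurable.ite
      · exact measurableSet_lt measurable_const (by fun_prop)
      · fun_prop
      · fun_prop
    · filter_upwards with ς
      filter_upwards with t
      simp only [hF]
      by_cases ht : (0:ℝ) < ς * t + h * ε
      · rw [if_pos ht]
        have hd : (0:ℝ) < ε * h + (1 - ε) * (ς * t + h * ε) := by nlinarith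
        rw [Real.norm_eq_abs, abs_of_nonneg (by positivity)]
        apply div_le_div_of_nonneg_left (Real.exp_nonneg _) hεh
        nlinarith
      · rw [if_neg ht]
        simp [div_nonneg (Real.exp_nonneg _) hεh.le]
    · have : MeasureTheory.Integrable (fun t : ℝ => Real.exp (-(1/2) * t ^ 2)) :=
        integrable_exp_neg_mul_sq (by norm_num)
      have := this.div_const (ε * h)
      apply this.congr
      filter_upwards with t
      ring_nf
    · filter_upwards with t
      have hev : ∀ᶠ ς in nhdsWithin (0:ℝ) (Set.Ioi 0), F ς t =
          Real.exp (-t ^ 2 / 2) / (ε * h + (1 - ε) * (ς * t + h * ε)) := by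
        have hmem : Set.Ioo (0:ℝ) (h * ε / (|t| + 1)) ∈ nhdsWithin (0:ℝ) (Set.Ioi 0) :=
          Ioo_mem_nhdsGT_of_mem ⟨le_refl _, by positivity⟩
        filter_upwards [hmem] with ς hς
        obtain ⟨hς0, hςδ⟩ := hς
        have h1 : (0:ℝ) < ς * t + h * ε := by
          have habs : |ς * t| < h * ε := by
            rw [abs_mul, abs_of_pos hς0]
            have h2 : ς * (|t| + 1) < h * ε := (lt_div_iff₀ (by positivity)).mp hςδ
            nlinarith [abs_nonneg t]
          have hneg := neg_abs_le (ς * t)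
          linarith
        simp only [hF]
        rw [if_pos h1]
      refine Tendsto.congr' (hev.mono fun ς hς => hς.symm) ?_
      have hden : Tendsto (fun ς : ℝ => ε * h + (1 - ε) * (ς * t + h * ε))
          (nhdsWithin 0 (Set.Ioi 0)) (nhds (ε * h + (1 - ε) * (0 * t + h * ε))) := by
        apply Tendsto.mono_left _ nhdsWithin_le_nhds
        exact Continuous.tendsto (by fun_prop) 0
      have : (ε * h + (1 - ε) * (0 * t + h * ε)) = h * ε * (2 - ε) := by ring
      rw [this] at hden
      exact (tendsto_const_nhds.div hden hG.ne')
  -- compute the limit integral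
  have hlim : (∫ t : ℝ, Real.exp (-t ^ 2 / 2) / (h * ε * (2 - ε))) =
      Real.sqrt (2 * Real.pi) / (h * ε * (2 - ε)) := by
    rw [MeasureTheory.integral_div]
    congr 1
    have : ∀ t : ℝ, Real.exp (-t ^ 2 / 2) = Real.exp (-(1/2) * t ^ 2) := by
      intro t; ring_nf
    simp_rw [this]
    rw [integral_gaussian]
    congr 1
    ring
  rw [hlim] at key
  -- conclude
  have hfin : Tendsto (fun ς : ℝ => (∫ t : ℝ, F ς t) * ((h * ε * (2 - ε)) / Real.sqrt (2 * Real.pi)))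
      (nhdsWithin 0 (Set.Ioi 0)) (nhds 1) := by
    have hkm := key.mul_const ((h * ε * (2 - ε)) / Real.sqrt (2 * Real.pi))
    have hsqrt : Real.sqrt (2 * Real.pi) ≠ 0 := by positivity
    have hone : Real.sqrt (2 * Real.pi) / (h * ε * (2 - ε)) * ((h * ε * (2 - ε)) / Real.sqrt (2 * Real.pi)) = 1 := by
      have h2ε : (2 - ε) ≠ 0 := by linarith
      field_simp
    rwa [hone] at hkm
  apply hfin.congr'
  have hmem : Set.Ioi (0:ℝ) ∈ nhdsWithin (0:ℝ) (Set.Ioi 0) := self_mem_nhdsWithin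
  filter_upwards [hmem] with ς hς
  have hςpos : (0:ℝ) < ς := hς
  rw [laplace_aux_subst ε h ς hςpos.ne', abs_of_pos hςpos]
  have hid : (∫ t : ℝ, (if 0 < ς * t + h * ε then
      Real.exp (-t ^ 2 / 2) / (ε * h + (1 - ε) * (ς * t + h * ε)) else 0)) =
      ∫ t : ℝ, F ς t := rfl
  rw [hid]
  generalize (∫ t : ℝ, F ς t) = I
  have hsqrt : (0:ℝ) < Real.sqrt (2 * Real.pi) := by positivity
  rw [eq_div_iff (by positivity : Real.sqrt (2 * Real.pi) * ς / (h * ε * (2 - ε)) ≠ 0)]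
  have h2ε : (2 - ε) ≠ 0 := by linarith
  field_simp
end

section
/- Let μ ∈ (0,1), σ > 0, and let (g_{1,j}, g_{2,j}), j = 0, 1, 2, …, be IID copies of a centered bivariate normal random vector (r₁, r₂). Assume γ := μ E|1 + σ r₁| < 1. Then the partial sums of the series σ Σ_{j=0}^∞ μ^j g_{2,j} Π_{ℓ=0}^{j-1} (1 + σ g_{1,ℓ}) form an L¹-bounded martingale (with E of the absolute value of each partial sum bounded by σ E|g₂|/(1−γ)), and consequently the series converges almost surely. -/
open MeasureTheory ProbabilityTheory Set Filter

lemma gaussianReal_integrable_id' (v : NNReal) :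
    Integrable (fun x : ℝ => x) (gaussianReal 0 v) := by
  by_cases hv : v = 0
  · subst hv
    rw [gaussianReal_zero_var]
    refine ⟨measurable_id.aestronglyMeasurable, ?_⟩
    simp only [HasFiniteIntegral, lintegral_dirac]
    exact ENNReal.coe_lt_top
  · rw [gaussianReal_of_var_ne_zero _ hv]
    rw [integrable_withDensity_iff (measurable_gaussianPDF _ _)
      (ae_of_all _ fun x => ENNReal.ofReal_lt_top)]
    have hv' : 0 < (v : ℝ) := by
      exact_mod_cast pos_iff_ne_zero.mpr hv
    have hb : 0 < (2 * (v : ℝ))⁻¹ := by positivity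
    have hfun : (fun x : ℝ => x * (gaussianPDF 0 v x).toReal)
        = fun x => (Real.sqrt (2 * Real.pi * v))⁻¹ *
            (x * Real.exp (-(2 * (v : ℝ))⁻¹ * x ^ 2)) := by
      funext x
      rw [gaussianPDF, ENNReal.toReal_ofReal (gaussianPDFReal_nonneg _ _ _), gaussianPDFReal]
      rw [show -(x - 0) ^ 2 / (2 * (v : ℝ)) = -(2 * (v : ℝ))⁻¹ * x ^ 2 by ring]
      ring
    rw [hfun]
    exact (integrable_mul_exp_neg_mul_sq hb).const_mul _

lemma gaussianReal_integral_id' (v : NNReal) :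
    ∫ x, x ∂(gaussianReal 0 v) = 0 := by
  have hmap := gaussianReal_map_const_mul (μ := 0) (v := v) (-1)
  have hmap2 : Measure.map (fun x : ℝ => -1 * x) (gaussianReal 0 v) = gaussianReal 0 v := by
    rw [show ((-1 : ℝ) * ·) = (fun x : ℝ => -1 * x) from rfl] at hmap
    rw [hmap]
    congr 1
    · norm_num
    · rw [← NNReal.coe_inj]
      push_cast
      norm_num
  have hi := integral_map (μ := gaussianReal 0 v) (φ := fun x : ℝ => -1 * x)
    (measurable_const_mul (-1)).aemeasurable (f := fun x : ℝ => x)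
    measurable_id.aestronglyMeasurable
  rw [hmap2] at hi
  have h2 : ∫ x : ℝ, -1 * x ∂(gaussianReal 0 v) = -∫ x : ℝ, x ∂(gaussianReal 0 v) := by
    simp only [neg_one_mul]
    exact integral_neg _
  linarith

/-- The partial sums of `σ Σ_j μ^j g_{2,j} Π_{ℓ<j} (1 + σ g_{1,ℓ})`, where
`(g_{1,j}, g_{2,j})` are IID centered bivariate normal vectors and
`γ = μ E|1 + σ r₁| < 1`, form an `L¹`-bounded martingale (with the `L¹` norms bounded
by `σ E|g₂|/(1-γ)`) with respect to the natural filtration; consequently the series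
converges almost surely. -/
theorem martingale_series_converges_as {Ω : Type*} [MeasurableSpace Ω]
    (P : Measure Ω) [IsProbabilityMeasure P]
    (μ σ : ℝ) (hμ : μ ∈ Set.Ioo (0 : ℝ) 1) (hσ : 0 < σ)
    (ν : Measure (ℝ × ℝ)) [IsProbabilityMeasure ν]
    (hgauss : ∀ a b : ℝ, ∃ v : NNReal,
      ν.map (fun q : ℝ × ℝ => a * q.1 + b * q.2) = gaussianReal 0 v)
    (g : ℕ → Ω → ℝ × ℝ) (hgmeas : ∀ j, StronglyMeasurable (g j))
    (hgindep : iIndepFun g P)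
    (hglaw : ∀ j, P.map (g j) = ν)
    (hγ : μ * ∫ q, |1 + σ * q.1| ∂ν < 1)
    (M : ℕ → Ω → ℝ)
    (hM : ∀ m ω, M m ω = σ * ∑ j ∈ Finset.range (m + 1),
      μ ^ j * (g j ω).2 * ∏ ℓ ∈ Finset.range j, (1 + σ * (g ℓ ω).1)) :
    (∀ m, ∫ ω, |M m ω| ∂P ≤
        σ * (∫ q, |q.2| ∂ν) / (1 - μ * ∫ q, |1 + σ * q.1| ∂ν)) ∧
    Martingale M (Filtration.natural g hgmeas) P ∧
    ∀ᵐ ω ∂P, ∃ l : ℝ, Tendsto (fun m => M m ω) atTop (nhds l) := by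
  obtain ⟨hμ0, hμ1⟩ := hμ
  obtain ⟨v₁, hv₁⟩ := hgauss 1 0
  obtain ⟨v₂, hv₂⟩ := hgauss 0 1
  simp only [one_mul, zero_mul, add_zero] at hv₁
  simp only [one_mul, zero_mul, zero_add] at hv₂
  have hgM : ∀ j, Measurable (g j) := fun j => (hgmeas j).measurable
  have hint1 : Integrable (fun q : ℝ × ℝ => q.1) ν := by
    have h := gaussianReal_integrable_id' v₁
    rw [← hv₁] at h
    exact h.comp_measurable measurable_fst
  have hint2 : Integrable (fun q : ℝ × ℝ => q.2) ν := by
    have h := gaussianReal_integrable_id' v₂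
    rw [← hv₂] at h
    exact h.comp_measurable measurable_snd
  have hmean2 : ∫ q, q.2 ∂ν = 0 := by
    have h : ∫ x, x ∂(ν.map (fun q : ℝ × ℝ => q.2)) = 0 := by
      rw [hv₂]; exact gaussianReal_integral_id' v₂
    rwa [integral_map (φ := fun q : ℝ × ℝ => q.2) (f := fun x : ℝ => x)
      measurable_snd.aemeasurable measurable_id.aestronglyMeasurable] at h
  have hintY : Integrable (fun q : ℝ × ℝ => |1 + σ * q.1|) ν :=
    ((integrable_const (1 : ℝ)).add (hint1.const_mul σ)).abs
  have hintX : Integrable (fun q : ℝ × ℝ => |q.2|) ν := hint2.abs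
  set A := ∫ q, |1 + σ * q.1| ∂ν with hA
  set B := ∫ q, |q.2| ∂ν with hB
  have hA0 : 0 ≤ A := integral_nonneg fun q => abs_nonneg _
  have hB0 : 0 ≤ B := integral_nonneg fun q => abs_nonneg _
  have hγ0 : 0 ≤ μ * A := mul_nonneg hμ0.le hA0
  have h1γ : 0 < 1 - μ * A := by linarith
  have hPint : ∀ (j : ℕ) (F : ℝ × ℝ → ℝ), Integrable F ν →
      Integrable (fun ω => F (g j ω)) P := by
    intro j F hFi
    have h : Integrable F (P.map (g j)) := by rw [hglaw j]; exact hFi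
    exact h.comp_measurable (hgM j)
  have hPeq : ∀ (j : ℕ) (F : ℝ × ℝ → ℝ), Measurable F →
      ∫ ω, F (g j ω) ∂P = ∫ q, F q ∂ν := by
    intro j F hFm
    rw [← hglaw j, integral_map (hgM j).aemeasurable hFm.aestronglyMeasurable]
  set V : ℕ → Ω → ℝ := fun j ω => ∏ ℓ ∈ Finset.range j, (1 + σ * (g ℓ ω).1) with hV
  have hYint : ∀ j, Integrable (fun ω => 1 + σ * (g j ω).1) P := fun j =>
    hPint j _ ((integrable_const 1).add (hint1.const_mul σ))
  have hXint : ∀ j, Integrable (fun ω => (g j ω).2) P := fun j => hPint j _ hint2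
  -- independence of the product from the new coordinate
  have hVg : ∀ j, IndepFun (V j) (g j) P := by
    intro j
    have h := hgindep.indepFun_finset (Finset.range j) {j}
      (by simp [Finset.disjoint_left]; omega) hgM
    have h2 := h.comp
      (φ := fun x : ↥(Finset.range j) → ℝ × ℝ =>
        ∏ i : ↥(Finset.range j), (1 + σ * (x i).1))
      (ψ := fun x : ↥({j} : Finset ℕ) → ℝ × ℝ => x ⟨j, Finset.mem_singleton_self j⟩)
      (by
        apply Finset.measurable_prod
        intro i _
        exact measurable_const.add ((measurable_fst.comp (measurable_pi_apply i)).const_mul σ))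
      (measurable_pi_apply (X := fun _ : ↥({j} : Finset ℕ) => ℝ × ℝ) ⟨j, Finset.mem_singleton_self j⟩)
    have e1 : (fun x : ↥(Finset.range j) → ℝ × ℝ =>
        ∏ i : ↥(Finset.range j), (1 + σ * (x i).1)) ∘
        (fun a (i : ↥(Finset.range j)) => g i a) = V j := by
      funext a
      simp only [Function.comp]
      exact Finset.prod_coe_sort (Finset.range j) (fun ℓ => 1 + σ * (g ℓ a).1)
    rw [e1] at h2
    exact h2
  have hVX : ∀ j, IndepFun (V j) (fun ω => (g j ω).2) P := fun j =>
    (hVg j).comp measurable_id measurable_snd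
  have hVY : ∀ j, IndepFun (V j) (fun ω => 1 + σ * (g j ω).1) P := fun j =>
    (hVg j).comp measurable_id (measurable_const.add (measurable_fst.const_mul σ))
  have hVXabs : ∀ j, IndepFun (fun ω => |V j ω|) (fun ω => |(g j ω).2|) P := fun j =>
    (hVg j).comp measurable_abs measurable_snd.abs
  have hVYabs : ∀ j, IndepFun (fun ω => |V j ω|) (fun ω => |1 + σ * (g j ω).1|) P := fun j =>
    (hVg j).comp measurable_abs (measurable_const.add (measurable_fst.const_mul σ)).abs
  -- integrability and L¹ norm of the products, by induction
  have hVfact : ∀ j, Integrable (V j) P ∧ ∫ ω, |V j ω| ∂P = A ^ j := by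
    intro j
    induction j with
    | zero =>
      constructor
      · simpa [hV] using (integrable_const (1 : ℝ))
      · simp [hV]
    | succ n ih =>
      have hsucc : V (n + 1) = fun ω => V n ω * (1 + σ * (g n ω).1) := by
        funext ω
        simp only [hV]
        rw [Finset.prod_range_succ]
      constructor
      · rw [hsucc]
        exact (hVY n).integrable_mul ih.1 (hYint n)
      · have habs : ∀ ω, |V (n + 1) ω| = |V n ω| * |1 + σ * (g n ω).1| := by
          intro ω
          rw [hsucc, abs_mul]
        simp only [habs]
        have hmul : ∫ ω, |V n ω| * |1 + σ * (g n ω).1| ∂P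
            = (∫ ω, |V n ω| ∂P) * ∫ ω, |1 + σ * (g n ω).1| ∂P :=
          (hVYabs n).integral_mul_eq_mul_integral ih.1.abs.aestronglyMeasurable (hYint n).abs.aestronglyMeasurable
        rw [hmul, ih.2,
          hPeq n (fun q => |1 + σ * q.1|) ((measurable_const.add (measurable_fst.const_mul σ)).abs)]
        rw [← hA, pow_succ]
  have hXVint : ∀ j, Integrable (fun ω => (g j ω).2 * V j ω) P := fun j =>
    (hVX j).symm.integrable_mul (hXint j) (hVfact j).1
  have hXVnorm : ∀ j, ∫ ω, |(g j ω).2 * V j ω| ∂P = B * A ^ j := by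
    intro j
    have habs : ∀ ω, |(g j ω).2 * V j ω| = |(g j ω).2| * |V j ω| := fun ω => abs_mul _ _
    simp only [habs]
    have hmul : ∫ ω, |(g j ω).2| * |V j ω| ∂P
        = (∫ ω, |(g j ω).2| ∂P) * ∫ ω, |V j ω| ∂P :=
      (hVXabs j).symm.integral_mul_eq_mul_integral (hXint j).abs.aestronglyMeasurable (hVfact j).1.abs.aestronglyMeasurable
    rw [hmul, hPeq j (fun q => |q.2|) measurable_snd.abs, (hVfact j).2, ← hB]
  have hterm : ∀ j, Integrable (fun ω => μ ^ j * (g j ω).2 *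
      ∏ ℓ ∈ Finset.range j, (1 + σ * (g ℓ ω).1)) P := by
    intro j
    have h := (hXVint j).const_mul (μ ^ j)
    simpa [hV, mul_assoc] using h
  have hMeq : ∀ m, M m = fun ω => σ * ∑ j ∈ Finset.range (m + 1),
      μ ^ j * (g j ω).2 * ∏ ℓ ∈ Finset.range j, (1 + σ * (g ℓ ω).1) :=
    fun m => funext (hM m)
  have hMint : ∀ m, Integrable (M m) P := by
    intro m
    rw [hMeq m]
    exact (integrable_finset_sum _ fun j _ => hterm j).const_mul σ
  -- L¹ bound
  have hbound : ∀ m, ∫ ω, |M m ω| ∂P ≤ σ * B / (1 - μ * A) := by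
    intro m
    have h1 : ∀ ω, |M m ω| = σ * |∑ j ∈ Finset.range (m + 1),
        μ ^ j * (g j ω).2 * ∏ ℓ ∈ Finset.range j, (1 + σ * (g ℓ ω).1)| := by
      intro ω
      rw [hM m ω, abs_mul, abs_of_pos hσ]
    simp only [h1]
    rw [integral_const_mul]
    have h2 : ∫ ω, |∑ j ∈ Finset.range (m + 1),
        μ ^ j * (g j ω).2 * ∏ ℓ ∈ Finset.range j, (1 + σ * (g ℓ ω).1)| ∂P
        ≤ B * (1 - μ * A)⁻¹ := by
      have step1 : ∫ ω, |∑ j ∈ Finset.range (m + 1),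
          μ ^ j * (g j ω).2 * ∏ ℓ ∈ Finset.range j, (1 + σ * (g ℓ ω).1)| ∂P
          ≤ ∫ ω, ∑ j ∈ Finset.range (m + 1),
            |μ ^ j * (g j ω).2 * ∏ ℓ ∈ Finset.range j, (1 + σ * (g ℓ ω).1)| ∂P := by
        apply integral_mono (integrable_finset_sum _ fun j _ => hterm j).abs
          (integrable_finset_sum _ fun j _ => (hterm j).abs)
        intro ω
        exact Finset.abs_sum_le_sum_abs _ _
      have step2 : ∫ ω, ∑ j ∈ Finset.range (m + 1),
          |μ ^ j * (g j ω).2 * ∏ ℓ ∈ Finset.range j, (1 + σ * (g ℓ ω).1)| ∂P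
          = ∑ j ∈ Finset.range (m + 1), B * (μ * A) ^ j := by
        rw [integral_finset_sum _ fun j _ => (hterm j).abs]
        apply Finset.sum_congr rfl
        intro j _
        have habs : ∀ ω, |μ ^ j * (g j ω).2 *
            ∏ ℓ ∈ Finset.range j, (1 + σ * (g ℓ ω).1)| = μ ^ j * |(g j ω).2 * V j ω| := by
          intro ω
          rw [mul_assoc, abs_mul, abs_of_pos (pow_pos hμ0 j)]
        simp only [habs]
        rw [integral_const_mul, hXVnorm j, mul_pow]
        ring
      have step3 : ∑ j ∈ Finset.range (m + 1), B * (μ * A) ^ j ≤ B * (1 - μ * A)⁻¹ := by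
        rw [← Finset.mul_sum]
        apply mul_le_mul_of_nonneg_left _ hB0
        calc ∑ j ∈ Finset.range (m + 1), (μ * A) ^ j
            ≤ ∑' j : ℕ, (μ * A) ^ j := Summable.sum_le_tsum _ (fun i _ => pow_nonneg hγ0 i)
              (summable_geometric_of_lt_one hγ0 (by linarith))
          _ = (1 - μ * A)⁻¹ := tsum_geometric_of_lt_one hγ0 (by linarith)
      calc ∫ ω, |∑ j ∈ Finset.range (m + 1),
            μ ^ j * (g j ω).2 * ∏ ℓ ∈ Finset.range j, (1 + σ * (g ℓ ω).1)| ∂P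
          ≤ ∑ j ∈ Finset.range (m + 1), B * (μ * A) ^ j := step2 ▸ step1
        _ ≤ B * (1 - μ * A)⁻¹ := step3
    calc σ * ∫ ω, |∑ j ∈ Finset.range (m + 1),
          μ ^ j * (g j ω).2 * ∏ ℓ ∈ Finset.range j, (1 + σ * (g ℓ ω).1)| ∂P
        ≤ σ * (B * (1 - μ * A)⁻¹) := mul_le_mul_of_nonneg_left h2 hσ.le
      _ = σ * B / (1 - μ * A) := by rw [div_eq_mul_inv]; ring
  -- adaptedness
  have hgmF : ∀ m j, j ≤ m → Measurable[Filtration.natural g hgmeas m] (g j) := by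
    intro m j hjm
    exact ((Filtration.stronglyAdapted_natural hgmeas j).mono
      ((Filtration.natural g hgmeas).mono hjm)).measurable
  have hVmeasF : ∀ m j, j ≤ m + 1 → Measurable[Filtration.natural g hgmeas m] (V j) := by
    intro m j hj
    apply Finset.measurable_prod
    intro ℓ hℓ
    have hℓm : ℓ ≤ m := by
      have := Finset.mem_range.mp hℓ
      omega
    exact measurable_const.add ((measurable_fst.comp (hgmF m ℓ hℓm)).const_mul σ)
  have hadp : StronglyAdapted (Filtration.natural g hgmeas) M := by
    intro m
    apply Measurable.stronglyMeasurable
    rw [hMeq m]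
    apply Measurable.const_mul
    apply Finset.measurable_sum
    intro j hj
    have hjm : j ≤ m := by
      have := Finset.mem_range.mp hj
      omega
    apply Measurable.mul
    · exact (measurable_snd.comp (hgmF m j hjm)).const_mul (μ ^ j)
    · apply Finset.measurable_prod
      intro ℓ hℓ
      have hℓm : ℓ ≤ m := by
        have := Finset.mem_range.mp hℓ
        omega
      exact measurable_const.add ((measurable_fst.comp (hgmF m ℓ hℓm)).const_mul σ)
  -- martingale property
  have hmart : Martingale M (Filtration.natural g hgmeas) P := by
    apply martingale_nat hadp hMint
    intro n
    have hsplit : M (n + 1) = M n + fun ω =>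
        (σ * μ ^ (n + 1)) • ((g (n + 1) ω).2 * V (n + 1) ω) := by
      funext ω
      simp only [Pi.add_apply, smul_eq_mul, hM, hV]
      rw [Finset.sum_range_succ (n := n + 1)]
      ring
    have hD : Integrable (fun ω =>
        (σ * μ ^ (n + 1)) • ((g (n + 1) ω).2 * V (n + 1) ω)) P :=
      (hXVint (n + 1)).smul (σ * μ ^ (n + 1))
    have hcond : P[(fun ω => (g (n + 1) ω).2) | Filtration.natural g hgmeas n]
        =ᵐ[P] fun _ => ∫ ω, (g (n + 1) ω).2 ∂P :=
      condExp_indep_eq ((hgM (n + 1)).comap_le) ((Filtration.natural g hgmeas).le n)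
        ((measurable_snd.comp (comap_measurable (g (n + 1)))).stronglyMeasurable)
        (hgindep.indep_comap_natural_of_lt hgmeas (Nat.lt_succ_self n))
    have hzero : ∫ ω, (g (n + 1) ω).2 ∂P = 0 := by
      rw [hPeq _ _ measurable_snd, hmean2]
    have hXV0 : P[(fun ω => (g (n + 1) ω).2 * V (n + 1) ω) |
        Filtration.natural g hgmeas n] =ᵐ[P] 0 := by
      have hcomm : (fun ω => (g (n + 1) ω).2 * V (n + 1) ω)
          = V (n + 1) * fun ω => (g (n + 1) ω).2 := by
        funext ω
        simp [mul_comm]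
      rw [hcomm]
      refine (condExp_mul_of_stronglyMeasurable_left
        ((hVmeasF n (n + 1) le_rfl).stronglyMeasurable) ?_ (hXint (n + 1))).trans ?_
      · have := (hVX (n + 1)).integrable_mul (hVfact (n + 1)).1 (hXint (n + 1))
        exact this
      · filter_upwards [hcond] with ω hω
        simp only [Pi.mul_apply, hω, hzero, Pi.zero_apply, mul_zero]
    have hD0 : P[(fun ω => (σ * μ ^ (n + 1)) • ((g (n + 1) ω).2 * V (n + 1) ω)) |
        Filtration.natural g hgmeas n] =ᵐ[P] 0 := by
      refine (condExp_smul (σ * μ ^ (n + 1))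
        (fun ω => (g (n + 1) ω).2 * V (n + 1) ω) _).trans ?_
      filter_upwards [hXV0] with ω hω
      simp only [Pi.smul_apply, hω, Pi.zero_apply, smul_zero]
    have key : P[M (n + 1) | Filtration.natural g hgmeas n] =ᵐ[P] M n := by
      rw [hsplit]
      refine (condExp_add (hMint n) hD _).trans ?_
      rw [condExp_of_stronglyMeasurable ((Filtration.natural g hgmeas).le n)
        (hadp n) (hMint n)]
      filter_upwards [hD0] with ω hω
      simp only [Pi.add_apply, hω, Pi.zero_apply, add_zero]
    exact key.symm
  refine ⟨hbound, hmart, ?_⟩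
  have hbdd : ∀ n, eLpNorm (M n) 1 P ≤ ((σ * B / (1 - μ * A)).toNNReal : ENNReal) := by
    intro n
    rw [eLpNorm_one_eq_lintegral_enorm, ← ofReal_integral_norm_eq_lintegral_enorm (hMint n)]
    have : ∫ ω, ‖M n ω‖ ∂P = ∫ ω, |M n ω| ∂P := by
      simp [Real.norm_eq_abs]
    rw [this]
    exact ENNReal.ofReal_le_ofReal (hbound n)
  exact hmart.submartingale.exists_ae_tendsto_of_bdd hbdd
end

section
/- Let X₁, X₂, …, X_n be independent symmetric real random variables, S_k = Σ_{j=1}^k X_j, and S_n* = max_{1 ≤ j ≤ n} S_j. Then for any t, u > 0: 2 P(S_n ≥ t + 2u) − 2 Σ_{k=1}^n P(X_k ≥ u) ≤ P(S_n* ≥ t) ≤ 2 P(S_n ≥ t). -/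
open MeasureTheory ProbabilityTheory Set Filter
open scoped ENNReal

lemma levy_aux_symm_sum {Ω : Type*} [MeasurableSpace Ω] (P : Measure Ω) [IsProbabilityMeasure P]
    {ι : Type*} (f : ι → Ω → ℝ) (hmeas : ∀ i, Measurable (f i))
    (hindep : iIndepFun (m := fun _ : ι => (inferInstance : MeasurableSpace ℝ)) f P)
    (hsymm : ∀ i, P.map (f i) = P.map (fun ω => -(f i ω)))
    (s : Finset ι) :
    P.map (fun ω => ∑ i ∈ s, f i ω) = P.map (fun ω => -∑ i ∈ s, f i ω) := by
  classical
  induction s using Finset.induction with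
  | empty => simp
  | @insert a s ha ih =>
    have hS : Measurable (fun ω => ∑ i ∈ s, f i ω) :=
      Finset.measurable_sum _ fun i _ => hmeas i
    have hind : IndepFun (f a) (fun ω => ∑ i ∈ s, f i ω) P := by
      have := (hindep.indepFun_finsetSum_of_notMem hmeas ha).symm
      convert this using 1
      funext ω
      simp [Finset.sum_apply]
    have hindneg : IndepFun (fun ω => -(f a ω)) (fun ω => -∑ i ∈ s, f i ω) P :=
      hind.comp measurable_neg measurable_neg
    have key : ∀ (g h : Ω → ℝ), Measurable g → Measurable h → IndepFun g h P →
        P.map (fun ω => g ω + h ω) = ((P.map g).prod (P.map h)).map (fun p => p.1 + p.2) := by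
      intro g h hg hh hgh
      have hjoint : P.map (fun ω => (g ω, h ω)) = (P.map g).prod (P.map h) :=
        (indepFun_iff_map_prod_eq_prod_map_map hg.aemeasurable hh.aemeasurable).mp hgh
      rw [← hjoint, Measure.map_map measurable_add (hg.prodMk hh)]
      rfl
    have e1 : P.map (fun ω => ∑ i ∈ insert a s, f i ω)
        = ((P.map (f a)).prod (P.map (fun ω => ∑ i ∈ s, f i ω))).map (fun p => p.1 + p.2) := by
      rw [← key _ _ (hmeas a) hS hind]
      congr 1; funext ω; rw [Finset.sum_insert ha]
    have e2 : P.map (fun ω => -∑ i ∈ insert a s, f i ω)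
        = ((P.map (fun ω => -(f a ω))).prod (P.map (fun ω => -∑ i ∈ s, f i ω))).map
            (fun p => p.1 + p.2) := by
      rw [← key (fun ω => -(f a ω)) (fun ω => -∑ i ∈ s, f i ω) (hmeas a).neg hS.neg hindneg]
      congr 1; funext ω; rw [Finset.sum_insert ha, neg_add]
    rw [e1, e2, hsymm a, ih]

lemma levy_aux_bounds {Ω : Type*} [MeasurableSpace Ω] (P : Measure Ω) [IsProbabilityMeasure P]
    (T : Ω → ℝ) (hT : Measurable T) (hsym : P.map T = P.map (fun ω => -T ω))
    (u : ℝ) (hu : 0 < u) :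
    1 ≤ 2 * P {ω | 0 ≤ T ω} ∧ 2 * P {ω | u < T ω} ≤ 1 := by
  have hswap : ∀ B : Set ℝ, MeasurableSet B → P (T ⁻¹' B) = P (T ⁻¹' (Neg.neg ⁻¹' B)) := by
    intro B hB
    have h1 : P (T ⁻¹' B) = P.map T B := (Measure.map_apply hT hB).symm
    have h2 : P.map (fun ω => -T ω) B = P (T ⁻¹' (Neg.neg ⁻¹' B)) := by
      rw [Measure.map_apply (f := fun ω => -T ω) hT.neg hB]; rfl
    rw [h1, hsym, h2]
  constructor
  · have h1 : P (T ⁻¹' Set.Iic 0) = P (T ⁻¹' Set.Ici 0) := by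
      have := hswap (Set.Ici 0) measurableSet_Ici
      have hpre : (Neg.neg ⁻¹' Set.Ici (0:ℝ)) = Set.Iic 0 := by
        ext x; simp
      rw [hpre] at this
      exact this.symm
    have hcover : (1 : ℝ≥0∞) ≤ P (T ⁻¹' Set.Ici 0) + P (T ⁻¹' Set.Iic 0) := by
      have : (Set.univ : Set Ω) ⊆ T ⁻¹' Set.Ici 0 ∪ T ⁻¹' Set.Iic 0 := by
        intro ω _
        rcases le_total 0 (T ω) with h | h
        · exact Or.inl h
        · exact Or.inr h
      calc (1:ℝ≥0∞) = P Set.univ := (measure_univ).symm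
        _ ≤ P (T ⁻¹' Set.Ici 0 ∪ T ⁻¹' Set.Iic 0) := measure_mono this
        _ ≤ _ := measure_union_le _ _
    have : {ω | 0 ≤ T ω} = T ⁻¹' Set.Ici 0 := rfl
    rw [this, two_mul]
    calc (1:ℝ≥0∞) ≤ P (T ⁻¹' Set.Ici 0) + P (T ⁻¹' Set.Iic 0) := hcover
      _ = P (T ⁻¹' Set.Ici 0) + P (T ⁻¹' Set.Ici 0) := by rw [h1]
  · have h1 : P (T ⁻¹' Set.Ioi u) = P (T ⁻¹' Set.Iio (-u)) := by
      have := hswap (Set.Ioi u) measurableSet_Ioi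
      have hpre : (Neg.neg ⁻¹' Set.Ioi u) = Set.Iio (-u) := by
        ext x; simp [lt_neg]
      rw [hpre] at this
      exact this
    have hdisj : Disjoint (T ⁻¹' Set.Ioi u) (T ⁻¹' Set.Iio (-u)) := by
      apply Set.disjoint_left.mpr
      intro ω h1 h2
      simp only [Set.mem_preimage, Set.mem_Ioi, Set.mem_Iio] at h1 h2
      linarith
    have : {ω | u < T ω} = T ⁻¹' Set.Ioi u := rfl
    rw [this, two_mul]
    calc P (T ⁻¹' Set.Ioi u) + P (T ⁻¹' Set.Ioi u)
        = P (T ⁻¹' Set.Ioi u) + P (T ⁻¹' Set.Iio (-u)) := by rw [h1]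
      _ = P (T ⁻¹' Set.Ioi u ∪ T ⁻¹' Set.Iio (-u)) :=
          (measure_union hdisj (hT measurableSet_Iio)).symm
      _ ≤ P Set.univ := measure_mono (Set.subset_univ _)
      _ = 1 := measure_univ

noncomputable def levyS {Ω : Type*} (X : ℕ → Ω → ℝ) (k : ℕ) (ω : Ω) : ℝ :=
  ∑ i ∈ Finset.Icc 1 k, X i ω

noncomputable def levyT {Ω : Type*} (X : ℕ → Ω → ℝ) (n k : ℕ) (ω : Ω) : ℝ :=
  ∑ i ∈ Finset.Icc (k + 1) n, X i ω

def levyA {Ω : Type*} (X : ℕ → Ω → ℝ) (t : ℝ) (k : ℕ) : Set Ω :=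
  {ω | t ≤ levyS X k ω} ∩ ⋂ j ∈ Finset.Ico 1 k, {ω | levyS X j ω < t}

lemma mem_levyA {Ω : Type*} {X : ℕ → Ω → ℝ} {t : ℝ} {k : ℕ} {ω : Ω} :
    ω ∈ levyA X t k ↔ t ≤ levyS X k ω ∧ ∀ j ∈ Finset.Ico 1 k, levyS X j ω < t := by
  simp [levyA]

lemma levy_Icc_Ioc (a b : ℕ) : Finset.Icc (a + 1) b = Finset.Ioc a b := by
  rw [← Finset.Icc_add_one_left_eq_Ioc]

lemma levy_decomp {Ω : Type*} (X : ℕ → Ω → ℝ) {n k : ℕ} (hkn : k ≤ n) (ω : Ω) :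
    levyS X n ω = levyS X k ω + levyT X n k ω := by
  have h1 : Finset.Icc 1 n = Finset.Ioc 0 n := levy_Icc_Ioc 0 n
  have h2 : Finset.Icc 1 k = Finset.Ioc 0 k := levy_Icc_Ioc 0 k
  have h3 : Finset.Icc (k + 1) n = Finset.Ioc k n := levy_Icc_Ioc k n
  unfold levyS levyT
  rw [h1, h2, h3]
  exact (Finset.sum_Ioc_consecutive _ (Nat.zero_le k) hkn).symm

lemma levy_step {Ω : Type*} (X : ℕ → Ω → ℝ) {k : ℕ} (hk : 1 ≤ k) (ω : Ω) :
    levyS X k ω = levyS X (k - 1) ω + X k ω := by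
  obtain ⟨m, rfl⟩ : ∃ m, k = m + 1 := ⟨k - 1, by omega⟩
  unfold levyS
  rw [Finset.sum_Icc_succ_top (by omega), Nat.add_sub_cancel]

lemma levy_cross {Ω : Type*} (X : ℕ → Ω → ℝ) (t : ℝ) (n : ℕ) (ω : Ω)
    (h : ∃ j, 1 ≤ j ∧ j ≤ n ∧ t ≤ levyS X j ω) :
    ∃ k, 1 ≤ k ∧ k ≤ n ∧ ω ∈ levyA X t k := by
  classical
  obtain ⟨hk1, hkn, hkt⟩ := Nat.find_spec h
  refine ⟨Nat.find h, hk1, hkn, ?_⟩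
  rw [mem_levyA]
  refine ⟨hkt, fun j hj => ?_⟩
  rw [Finset.mem_Ico] at hj
  by_contra hcon
  push_neg at hcon
  exact Nat.find_min h hj.2 ⟨hj.1, by omega, hcon⟩

lemma levy_disj {Ω : Type*} (X : ℕ → Ω → ℝ) (t : ℝ) (n : ℕ) :
    (↑(Finset.Icc 1 n) : Set ℕ).PairwiseDisjoint (levyA X t) := by
  intro k hk l hl hne
  simp only [Finset.coe_Icc, Set.mem_Icc] at hk hl
  have key : ∀ a b : ℕ, 1 ≤ a → a < b → Disjoint (levyA X t a) (levyA X t b) := by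
    intro a b ha hab
    apply Set.disjoint_left.mpr
    intro ω hωa hωb
    obtain ⟨h1, _⟩ := mem_levyA.mp hωa
    obtain ⟨_, h2⟩ := mem_levyA.mp hωb
    exact absurd h1 (not_le.mpr (h2 a (Finset.mem_Ico.mpr ⟨ha, hab⟩)))
  rcases Nat.lt_or_ge k l with h | h
  · exact key k l hk.1 h
  · exact (key l k hl.1 (by omega)).symm

lemma levyS_meas {Ω : Type*} [MeasurableSpace Ω] {X : ℕ → Ω → ℝ}
    (hmeas : ∀ k, Measurable (X k)) (k : ℕ) : Measurable (levyS X k) := by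
  unfold levyS
  exact Finset.measurable_sum _ fun i _ => hmeas i

lemma levyT_meas {Ω : Type*} [MeasurableSpace Ω] {X : ℕ → Ω → ℝ}
    (hmeas : ∀ k, Measurable (X k)) (n k : ℕ) : Measurable (levyT X n k) := by
  unfold levyT
  exact Finset.measurable_sum _ fun i _ => hmeas i

lemma levyA_meas {Ω : Type*} [MeasurableSpace Ω] {X : ℕ → Ω → ℝ}
    (hmeas : ∀ k, Measurable (X k)) (t : ℝ) (k : ℕ) : MeasurableSet (levyA X t k) := by
  apply MeasurableSet.inter
  · exact measurableSet_le measurable_const (levyS_meas hmeas k)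
  · exact MeasurableSet.biInter (Finset.Ico 1 k).countable_toSet
      fun j _ => measurableSet_lt (levyS_meas hmeas j) measurable_const

lemma levy_aux_indep {Ω : Type*} [MeasurableSpace Ω] (P : Measure Ω)
    {ι : Type*} (f : ι → Ω → ℝ) (hmeas : ∀ i, Measurable (f i))
    (hindep : iIndepFun (m := fun _ : ι => (inferInstance : MeasurableSpace ℝ)) f P)
    (s : Set ι) (A B : Set Ω)
    (hA : MeasurableSet[⨆ j ∈ s, MeasurableSpace.comap (f j) inferInstance] A)
    (hB : MeasurableSet[⨆ j ∈ sᶜ, MeasurableSpace.comap (f j) inferInstance] B) :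
    P (A ∩ B) = P A * P B :=
  (Indep_iff _ _ _).mp
    (indep_biSup_compl (fun j => (hmeas j).comap_le) hindep.iIndep s) A B hA hB

lemma levy_aux_measX {Ω : Type*} [MeasurableSpace Ω] (n : ℕ) (X : ℕ → Ω → ℝ)
    (s : Set (Fin n)) (i : ℕ) (h1 : 1 ≤ i) (hn : i ≤ n)
    (hj : ∀ (h : i - 1 < n), (⟨i - 1, h⟩ : Fin n) ∈ s) :
    Measurable[⨆ j ∈ s, MeasurableSpace.comap (X (j.val + 1)) inferInstance] (X i) := by
  have hlt : i - 1 < n := by omega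
  have h := le_biSup (fun j : Fin n =>
    MeasurableSpace.comap (X (j.val + 1)) inferInstance) (hj hlt)
  refine measurable_iff_comap_le.mpr ?_
  have hii : i - 1 + 1 = i := by omega
  simpa [hii] using h

lemma levy_key {Ω : Type*} [MeasurableSpace Ω] (P : Measure Ω) [IsProbabilityMeasure P]
    (n : ℕ) (X : ℕ → Ω → ℝ) (hmeas : ∀ k, Measurable (X k))
    (hindep : iIndepFun (m := fun _ : Fin n => (inferInstance : MeasurableSpace ℝ))
      (fun j : Fin n => X (j.val + 1)) P)
    (hsymm : ∀ k ∈ Finset.Icc 1 n, P.map (X k) = P.map (fun ω => -(X k ω)))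
    (t u : ℝ) (ht : 0 < t) (hu : 0 < u) (k : ℕ) (hk1 : 1 ≤ k) (hkn : k ≤ n) :
    P (levyA X t k) ≤ 2 * P (levyA X t k ∩ {ω | t ≤ levyS X n ω}) ∧
    2 * P (levyA X t k ∩ {ω | t + 2 * u ≤ levyS X n ω}) ≤
      2 * P {ω | u ≤ X k ω} + P (levyA X t k) := by
  classical
  -- measurability wrt the first σ-algebra
  have hXmeasM1 : ∀ i, 1 ≤ i → i ≤ k →
      Measurable[⨆ j ∈ {j : Fin n | j.val + 1 ≤ k},
        MeasurableSpace.comap (X (j.val + 1)) inferInstance] (X i) := by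
    intro i h1 hik
    exact levy_aux_measX n X _ i h1 (le_trans hik hkn)
      (fun h => by simp only [Set.mem_setOf_eq]; omega)
  have hSmeasM1 : ∀ j, j ≤ k →
      Measurable[⨆ j ∈ {j : Fin n | j.val + 1 ≤ k},
        MeasurableSpace.comap (X (j.val + 1)) inferInstance] (levyS X j) := by
    intro j hj
    unfold levyS
    exact Finset.measurable_sum _ fun i hi =>
      hXmeasM1 i (Finset.mem_Icc.mp hi).1 (le_trans (Finset.mem_Icc.mp hi).2 hj)
  have hAmeasM1 : MeasurableSet[⨆ j ∈ {j : Fin n | j.val + 1 ≤ k},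
      MeasurableSpace.comap (X (j.val + 1)) inferInstance] (levyA X t k) := by
    apply MeasurableSet.inter
    · exact measurableSet_le measurable_const (hSmeasM1 k le_rfl)
    · exact MeasurableSet.biInter (Finset.Ico 1 k).countable_toSet
        fun j hj => measurableSet_lt (hSmeasM1 j (le_of_lt (Finset.mem_Ico.mp
          (Finset.mem_coe.mp hj)).2)) measurable_const
  have hA'measM1 : MeasurableSet[⨆ j ∈ {j : Fin n | j.val + 1 ≤ k},
      MeasurableSpace.comap (X (j.val + 1)) inferInstance]
      (levyA X t k ∩ {ω | X k ω < u}) :=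
    hAmeasM1.inter (measurableSet_lt (hXmeasM1 k hk1 le_rfl) measurable_const)
  -- measurability of the tail sum wrt the second σ-algebra
  have hXmeasM2 : ∀ i, k + 1 ≤ i → i ≤ n →
      Measurable[⨆ j ∈ {j : Fin n | j.val + 1 ≤ k}ᶜ,
        MeasurableSpace.comap (X (j.val + 1)) inferInstance] (X i) := by
    intro i h1 hin
    exact levy_aux_measX n X _ i (by omega) hin
      (fun h => by simp only [Set.mem_compl_iff, Set.mem_setOf_eq]; omega)
  have hTmeasM2 : Measurable[⨆ j ∈ {j : Fin n | j.val + 1 ≤ k}ᶜ,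
      MeasurableSpace.comap (X (j.val + 1)) inferInstance] (levyT X n k) := by
    unfold levyT
    exact Finset.measurable_sum _ fun i hi =>
      hXmeasM2 i (Finset.mem_Icc.mp hi).1 (Finset.mem_Icc.mp hi).2
  -- independence factorization
  have hfact := levy_aux_indep P (fun j : Fin n => X (j.val + 1)) (fun j => hmeas _)
    hindep {j : Fin n | j.val + 1 ≤ k}
  -- symmetry of the tail sum
  have hTmeas : Measurable (levyT X n k) := levyT_meas hmeas n k
  have hTsymm : P.map (levyT X n k) = P.map (fun ω => -(levyT X n k ω)) := by
    have hsum : ∀ ω : Ω,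
        ∑ j ∈ Finset.univ.filter (fun j : Fin n => k + 1 ≤ j.val + 1), X (j.val + 1) ω
          = levyT X n k ω := by
      intro ω
      have himg : (Finset.univ.filter (fun j : Fin n => k + 1 ≤ j.val + 1)).image
          (fun j : Fin n => j.val + 1) = Finset.Icc (k + 1) n := by
        ext i
        simp only [Finset.mem_image, Finset.mem_filter, Finset.mem_univ, true_and,
          Finset.mem_Icc]
        constructor
        · rintro ⟨j, hj, rfl⟩
          exact ⟨hj, by omega⟩
        · rintro ⟨h1, h2⟩
          have hlt : i - 1 < n := by omega
          refine ⟨⟨i - 1, hlt⟩, ?_, ?_⟩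
          · show k + 1 ≤ i - 1 + 1; omega
          · show i - 1 + 1 = i; omega
      have := Finset.sum_image (s := Finset.univ.filter (fun j : Fin n => k + 1 ≤ j.val + 1))
        (g := fun j : Fin n => j.val + 1) (f := fun i => X i ω)
        (fun x _ y _ h => by simp only [add_left_inj] at h; exact Fin.ext h)
      rw [himg] at this
      rw [levyT, ← this]
    have h := levy_aux_symm_sum P (fun j : Fin n => X (j.val + 1)) (fun j => hmeas _)
      hindep (fun j => hsymm (j.val + 1)
        (Finset.mem_Icc.mpr ⟨Nat.le_add_left 1 j.val, Nat.succ_le_of_lt j.isLt⟩))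
      (Finset.univ.filter (fun j : Fin n => k + 1 ≤ j.val + 1))
    simp only [hsum] at h
    exact h
  obtain ⟨hge, hlt⟩ := levy_aux_bounds P (levyT X n k) hTmeas hTsymm u hu
  constructor
  · -- upper key inequality
    have hsub : levyA X t k ∩ {ω | 0 ≤ levyT X n k ω}
        ⊆ levyA X t k ∩ {ω | t ≤ levyS X n ω} := by
      rintro ω ⟨hA, hT⟩
      refine ⟨hA, ?_⟩
      have hdec := levy_decomp X hkn ω
      have h1 := (mem_levyA.mp hA).1
      simp only [Set.mem_setOf_eq] at hT ⊢
      rw [hdec]; linarith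
    have heq : P (levyA X t k ∩ {ω | 0 ≤ levyT X n k ω})
        = P (levyA X t k) * P {ω | 0 ≤ levyT X n k ω} :=
      hfact _ _ hAmeasM1 (measurableSet_le measurable_const hTmeasM2)
    calc P (levyA X t k) = P (levyA X t k) * 1 := (mul_one _).symm
      _ ≤ P (levyA X t k) * (2 * P {ω | 0 ≤ levyT X n k ω}) := mul_le_mul_right hge _
      _ = 2 * (P (levyA X t k) * P {ω | 0 ≤ levyT X n k ω}) := by ring
      _ = 2 * P (levyA X t k ∩ {ω | 0 ≤ levyT X n k ω}) := by rw [heq]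
      _ ≤ 2 * P (levyA X t k ∩ {ω | t ≤ levyS X n ω}) :=
          mul_le_mul_right (measure_mono hsub) _
  · -- lower key inequality
    have hsub : levyA X t k ∩ {ω | t + 2 * u ≤ levyS X n ω} ⊆
        {ω | u ≤ X k ω} ∪
          ((levyA X t k ∩ {ω | X k ω < u}) ∩ {ω | u < levyT X n k ω}) := by
      rintro ω ⟨hA, hS⟩
      by_cases hX : u ≤ X k ω
      · exact Or.inl hX
      push_neg at hX
      refine Or.inr ⟨⟨hA, hX⟩, ?_⟩
      obtain ⟨hAk, hAprev⟩ := mem_levyA.mp hA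
      have hprev : levyS X (k - 1) ω < t := by
        rcases Nat.eq_or_lt_of_le hk1 with h | h
        · have h0 : k - 1 = 0 := by omega
          rw [h0]
          have : levyS X 0 ω = 0 := by simp [levyS]
          rw [this]; exact ht
        · exact hAprev (k - 1) (Finset.mem_Ico.mpr ⟨by omega, by omega⟩)
      have hsk := levy_step X hk1 ω
      have hdec := levy_decomp X hkn ω
      simp only [Set.mem_setOf_eq] at hS ⊢
      linarith
    have heq : P ((levyA X t k ∩ {ω | X k ω < u}) ∩ {ω | u < levyT X n k ω})
        = P (levyA X t k ∩ {ω | X k ω < u}) * P {ω | u < levyT X n k ω} :=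
      hfact _ _ hA'measM1 (measurableSet_lt measurable_const hTmeasM2)
    calc 2 * P (levyA X t k ∩ {ω | t + 2 * u ≤ levyS X n ω})
        ≤ 2 * (P {ω | u ≤ X k ω} +
            P ((levyA X t k ∩ {ω | X k ω < u}) ∩ {ω | u < levyT X n k ω})) := by
          gcongr
          exact (measure_mono hsub).trans (measure_union_le _ _)
      _ = 2 * P {ω | u ≤ X k ω} +
            P (levyA X t k ∩ {ω | X k ω < u}) * (2 * P {ω | u < levyT X n k ω}) := by
          rw [heq]; ring
      _ ≤ 2 * P {ω | u ≤ X k ω} + P (levyA X t k ∩ {ω | X k ω < u}) * 1 := by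
          gcongr
      _ ≤ 2 * P {ω | u ≤ X k ω} + P (levyA X t k) := by
          rw [mul_one]
          gcongr
          exact Set.inter_subset_left

/-- Lévy-type inequalities (quantified reflection principle): for independent symmetric
random variables `X₁, …, X_n` with partial sums `S_k` and running maximum
`S_n* = max_{1≤j≤n} S_j`, and any `t, u > 0`,
`2 P(S_n ≥ t + 2u) - 2 Σ_{k=1}^n P(X_k ≥ u) ≤ P(S_n* ≥ t) ≤ 2 P(S_n ≥ t)`. -/
theorem levy_reflection_inequalities {Ω : Type*} [MeasurableSpace Ω]
    (P : Measure Ω) [IsProbabilityMeasure P]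
    (n : ℕ) (hn : 1 ≤ n) (X : ℕ → Ω → ℝ)
    (hmeas : ∀ k, Measurable (X k))
    (hindep : iIndepFun (m := fun _ : Fin n => (inferInstance : MeasurableSpace ℝ))
      (fun j : Fin n => X (j.val + 1)) P)
    (hsymm : ∀ k ∈ Finset.Icc 1 n, P.map (X k) = P.map (fun ω => -(X k ω)))
    (t u : ℝ) (ht : 0 < t) (hu : 0 < u) :
    2 * (P {ω | t + 2 * u ≤ ∑ j ∈ Finset.Icc 1 n, X j ω}).toReal -
        2 * ∑ k ∈ Finset.Icc 1 n, (P {ω | u ≤ X k ω}).toReal ≤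
      (P {ω | t ≤ (Finset.Icc 1 n).sup' (Finset.nonempty_Icc.mpr hn)
          (fun j => ∑ i ∈ Finset.Icc 1 j, X i ω)}).toReal ∧
    (P {ω | t ≤ (Finset.Icc 1 n).sup' (Finset.nonempty_Icc.mpr hn)
        (fun j => ∑ i ∈ Finset.Icc 1 j, X i ω)}).toReal ≤
      2 * (P {ω | t ≤ ∑ j ∈ Finset.Icc 1 n, X j ω}).toReal := by
  classical
  have hAm : ∀ k, MeasurableSet (levyA X t k) := fun k => levyA_meas hmeas t k
  have hSm : ∀ k, Measurable (levyS X k) := fun k => levyS_meas hmeas k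
  have hkey : ∀ k ∈ Finset.Icc 1 n,
      P (levyA X t k) ≤ 2 * P (levyA X t k ∩ {ω | t ≤ levyS X n ω}) ∧
      2 * P (levyA X t k ∩ {ω | t + 2 * u ≤ levyS X n ω}) ≤
        2 * P {ω | u ≤ X k ω} + P (levyA X t k) := fun k hk =>
    levy_key P n X hmeas hindep hsymm t u ht hu k
      (Finset.mem_Icc.mp hk).1 (Finset.mem_Icc.mp hk).2
  -- identify the running-maximum event
  have hstar : {ω | t ≤ (Finset.Icc 1 n).sup' (Finset.nonempty_Icc.mpr hn)
      (fun j => ∑ i ∈ Finset.Icc 1 j, X i ω)} = ⋃ k ∈ Finset.Icc 1 n, levyA X t k := by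
    ext ω
    simp only [Set.mem_setOf_eq, Finset.le_sup'_iff, Set.mem_iUnion, exists_prop]
    constructor
    · rintro ⟨j, hj, hjt⟩
      obtain ⟨k, h1, h2, h3⟩ := levy_cross X t n ω
        ⟨j, (Finset.mem_Icc.mp hj).1, (Finset.mem_Icc.mp hj).2, hjt⟩
      exact ⟨k, Finset.mem_Icc.mpr ⟨h1, h2⟩, h3⟩
    · rintro ⟨k, hk, hωk⟩
      exact ⟨k, hk, (mem_levyA.mp hωk).1⟩
  have hPstar : P {ω | t ≤ (Finset.Icc 1 n).sup' (Finset.nonempty_Icc.mpr hn)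
      (fun j => ∑ i ∈ Finset.Icc 1 j, X i ω)} = ∑ k ∈ Finset.Icc 1 n, P (levyA X t k) := by
    rw [hstar]
    exact measure_biUnion_finset (levy_disj X t n) (fun k _ => hAm k)
  -- upper bound in ℝ≥0∞
  have hdisj' : ∀ E : Set Ω, (↑(Finset.Icc 1 n) : Set ℕ).PairwiseDisjoint
      (fun k => levyA X t k ∩ E) := by
    intro E k hk l hl hne
    exact Disjoint.mono Set.inter_subset_left Set.inter_subset_left
      (levy_disj X t n hk hl hne)
  have hupper : P {ω | t ≤ (Finset.Icc 1 n).sup' (Finset.nonempty_Icc.mpr hn)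
      (fun j => ∑ i ∈ Finset.Icc 1 j, X i ω)} ≤ 2 * P {ω | t ≤ levyS X n ω} := by
    rw [hPstar]
    have h2 : ∑ k ∈ Finset.Icc 1 n, P (levyA X t k ∩ {ω | t ≤ levyS X n ω})
        = P (⋃ k ∈ Finset.Icc 1 n, (levyA X t k ∩ {ω | t ≤ levyS X n ω})) :=
      (measure_biUnion_finset (hdisj' _)
        (fun k _ => (hAm k).inter (measurableSet_le measurable_const (hSm n)))).symm
    calc ∑ k ∈ Finset.Icc 1 n, P (levyA X t k)
        ≤ ∑ k ∈ Finset.Icc 1 n, 2 * P (levyA X t k ∩ {ω | t ≤ levyS X n ω}) :=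
          Finset.sum_le_sum fun k hk => (hkey k hk).1
      _ = 2 * ∑ k ∈ Finset.Icc 1 n, P (levyA X t k ∩ {ω | t ≤ levyS X n ω}) := by
          rw [Finset.mul_sum]
      _ = 2 * P (⋃ k ∈ Finset.Icc 1 n, (levyA X t k ∩ {ω | t ≤ levyS X n ω})) := by
          rw [h2]
      _ ≤ 2 * P {ω | t ≤ levyS X n ω} := by
          gcongr
          exact Set.iUnion₂_subset fun k _ => Set.inter_subset_right
  -- lower bound in ℝ≥0∞
  have hsubU : {ω | t + 2 * u ≤ levyS X n ω} ⊆ ⋃ k ∈ Finset.Icc 1 n, levyA X t k := by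
    intro ω hω
    simp only [Set.mem_setOf_eq] at hω
    obtain ⟨k, h1, h2, h3⟩ := levy_cross X t n ω ⟨n, hn, le_rfl, by linarith⟩
    exact Set.mem_biUnion (Finset.mem_Icc.mpr ⟨h1, h2⟩) h3
  have hPlow : P {ω | t + 2 * u ≤ levyS X n ω}
      = ∑ k ∈ Finset.Icc 1 n, P (levyA X t k ∩ {ω | t + 2 * u ≤ levyS X n ω}) := by
    rw [← measure_biUnion_finset (hdisj' _)
      (fun k _ => (hAm k).inter (measurableSet_le measurable_const (hSm n)))]
    congr 1
    have hiu : ⋃ k ∈ Finset.Icc 1 n, (levyA X t k ∩ {ω | t + 2 * u ≤ levyS X n ω})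
        = (⋃ k ∈ Finset.Icc 1 n, levyA X t k) ∩ {ω | t + 2 * u ≤ levyS X n ω} := by
      ext ω
      simp only [Set.mem_iUnion, Set.mem_inter_iff, exists_prop]
      tauto
    rw [hiu, Set.inter_eq_right.mpr hsubU]
  have hlow : 2 * P {ω | t + 2 * u ≤ levyS X n ω} ≤
      2 * ∑ k ∈ Finset.Icc 1 n, P {ω | u ≤ X k ω} +
        P {ω | t ≤ (Finset.Icc 1 n).sup' (Finset.nonempty_Icc.mpr hn)
          (fun j => ∑ i ∈ Finset.Icc 1 j, X i ω)} := by
    rw [hPlow, Finset.mul_sum, hPstar, Finset.mul_sum, ← Finset.sum_add_distrib]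
    exact Finset.sum_le_sum fun k hk => (hkey k hk).2
  constructor
  · -- lower inequality, in reals
    have ha : {ω | t + 2 * u ≤ ∑ j ∈ Finset.Icc 1 n, X j ω}
        = {ω | t + 2 * u ≤ levyS X n ω} := rfl
    rw [ha]
    have hfin1 : (2 : ℝ≥0∞) * ∑ k ∈ Finset.Icc 1 n, P {ω | u ≤ X k ω} +
        P {ω | t ≤ (Finset.Icc 1 n).sup' (Finset.nonempty_Icc.mpr hn)
          (fun j => ∑ i ∈ Finset.Icc 1 j, X i ω)} ≠ ⊤ := by
      apply ENNReal.add_ne_top.mpr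
      constructor
      · exact ENNReal.mul_ne_top (by norm_num)
          (ENNReal.sum_ne_top.mpr fun k _ => measure_ne_top P _)
      · exact measure_ne_top P _
    have h := ENNReal.toReal_mono hfin1 hlow
    rw [ENNReal.toReal_mul, ENNReal.toReal_add
        (ENNReal.mul_ne_top (by norm_num) (ENNReal.sum_ne_top.mpr fun k _ => measure_ne_top P _))
        (measure_ne_top P _), ENNReal.toReal_mul,
      ENNReal.toReal_sum (fun k _ => measure_ne_top P _)] at h
    simp only [ENNReal.toReal_ofNat] at h
    linarith
  · -- upper inequality, in reals
    have ha : {ω | t ≤ ∑ j ∈ Finset.Icc 1 n, X j ω} = {ω | t ≤ levyS X n ω} := rfl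
    rw [ha]
    have h := ENNReal.toReal_mono
      (ENNReal.mul_ne_top (by norm_num) (measure_ne_top P _)) hupper
    rw [ENNReal.toReal_mul] at h
    simpa only [ENNReal.toReal_ofNat] using h
end
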